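/- For positive integers U, n, m, g with g < m/2, m ≤ n, 2m ≤ U − n, and U = n^{1+α} for real α > 0, let γ = α/(6(1+α)). Then C(U − n − m, m − g) ≥ 2^{3γ·m·log₂ U − m}. Concretely: C(U−n−m, m−g) ≥ C(U, m−g)·2^{−m} ≥ C(U, ⌈m/2⌉)·2^{−m} ≥ (U/m)^{m/2}·2^{−m} ≥ U^{3γm}·2^{−m}, using m ≤ n = U^{1/(1+α)} and m ≤ U/2. -/

import Mathlib

/-!
With `M = U − n − m` and `k = m − g`, the hypotheses `m ≤ n` and `n + 2m ≤ U` give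
`U m ≤ 4 n M`, i.e. `M / m ≥ (U / n) / 4 = n^α / 4`. Since `3γ(1 + α) = α / 2`, the left-hand
side is exactly `(n^α / 4)^{m/2}`, and `m / 2 ≤ k ≤ m` yields
`(M / m)^{m/2} ≤ (M / m)^k ≤ (M / k)^k ≤ C(M, k)`.
-/

namespace Nat

variable {K : Type*} [Field K] [LinearOrder K] [IsStrictOrderedRing K]

theorem div_pow_le_choose {n k : ℕ} (h : k ≤ n) : ((n : K) / k) ^ k ≤ n.choose k := by
  induction k generalizing n with
  | zero => simp
  | succ k ih =>
    obtain ⟨n, rfl⟩ : ∃ n', n = n' + 1 := ⟨n - 1, by omega⟩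
    have hkn : k ≤ n := by omega
    have hpow : (((n + 1 : ℕ) : K) / (k + 1 : ℕ)) ^ k ≤ ((n : K) / k) ^ k := by
      rcases Nat.eq_zero_or_pos k with rfl | hk
      · simp
      · refine pow_le_pow_left₀ (by positivity) ?_ k
        rw [div_le_div_iff₀ (by positivity) (by positivity)]
        push_cast
        nlinarith [(Nat.cast_le (α := K)).2 hkn]
    have hchoose : ((n + 1 : ℕ) : K) * n.choose k = (n + 1).choose (k + 1) * (k + 1 : ℕ) := by
      exact_mod_cast n.add_one_mul_choose_eq k
    calc (((n + 1 : ℕ) : K) / (k + 1 : ℕ)) ^ (k + 1)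
        = ((n + 1 : ℕ) : K) / (k + 1 : ℕ) * (((n + 1 : ℕ) : K) / (k + 1 : ℕ)) ^ k :=
          _root_.pow_succ' _ _
      _ ≤ ((n + 1 : ℕ) : K) / (k + 1 : ℕ) * n.choose k := by
        gcongr
        exact hpow.trans (ih hkn)
      _ = (n + 1).choose (k + 1) := by
        rw [div_mul_eq_mul_div, hchoose, mul_div_cancel_right₀ _ (by positivity)]

end Nat

theorem mul_le_four_mul_sub_sub {U n m : ℕ} (hmn : m ≤ n) (hU : n + 2 * m ≤ U) :
    U * m ≤ 4 * n * (U - n - m) := by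
  obtain ⟨t, rfl⟩ := Nat.exists_eq_add_of_le hU
  rw [show n + 2 * m + t - n - m = m + t by omega]
  nlinarith

theorem rpow_half_le_choose {M m k : ℕ} (hk : 0 < k) (hkm : k ≤ m) (hmk : m ≤ 2 * k)
    (hmM : m ≤ M) : ((M : ℝ) / m) ^ ((m : ℝ) / 2) ≤ M.choose k := by
  have hm : (0 : ℝ) < m := by exact_mod_cast hk.trans_le hkm
  calc ((M : ℝ) / m) ^ ((m : ℝ) / 2)
      ≤ ((M : ℝ) / m) ^ (k : ℝ) := by
        refine Real.rpow_le_rpow_of_exponent_le ((one_le_div hm).2 (by exact_mod_cast hmM)) ?_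
        rw [div_le_iff₀ two_pos]
        exact_mod_cast (by omega : m ≤ k * 2)
    _ = ((M : ℝ) / m) ^ k := Real.rpow_natCast _ k
    _ ≤ ((M : ℝ) / k) ^ k := by gcongr
    _ ≤ M.choose k := Nat.div_pow_le_choose (hkm.trans hmM)

theorem rpow_three_mul_mul_two_rpow_neg_eq {U n α γ : ℝ} (x : ℝ) (hn : 0 < n)
    (hα : 1 + α ≠ 0) (hγ : γ = α / (6 * (1 + α))) (hU : U = n ^ (1 + α)) :
    U ^ (3 * γ * x) * 2 ^ (-x) = (U / n / 4) ^ (x / 2) := by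
  have hUn : U / n = n ^ α := by
    rw [hU, Real.rpow_add hn, Real.rpow_one, mul_div_cancel_left₀ _ hn.ne']
  have hfour : (4 : ℝ) ^ (x / 2) = 2 ^ x := by
    rw [show (4 : ℝ) = 2 ^ (2 : ℝ) by norm_num, ← Real.rpow_mul zero_le_two]
    ring_nf
  rw [hUn, Real.div_rpow (by positivity) (by norm_num), hfour, hU, ← Real.rpow_mul hn.le,
    ← Real.rpow_mul hn.le, Real.rpow_neg zero_le_two, div_eq_mul_inv, hγ]
  congr 2
  field_simp
  ring

theorem choose_remaining_ge_general (U n m g : ℕ) (α γ : ℝ) (hα : 0 < α)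
    (hγ : γ = α / (6 * (1 + α)))
    (hUn : (U : ℝ) = (n : ℝ) ^ ((1 : ℝ) + α))
    (hg : 2 * g < m) (hmn : m ≤ n) (h2m : 2 * m ≤ U - n) :
    (U : ℝ) ^ (3 * γ * m) * 2 ^ (-(m : ℝ)) ≤ (((U - n - m).choose (m - g) : ℕ) : ℝ) := by
  have hm : 0 < m := by omega
  have hn : (0 : ℝ) < n := by exact_mod_cast hm.trans_le hmn
  have hbase : (U : ℝ) / n / 4 ≤ ((U - n - m : ℕ) : ℝ) / m := by
    rw [div_div, div_le_div_iff₀ (by positivity) (by positivity)]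
    exact_mod_cast (mul_le_four_mul_sub_sub hmn (by omega)).trans_eq (by ring)
  rw [rpow_three_mul_mul_two_rpow_neg_eq (m : ℝ) hn (by linarith) hγ hUn]
  calc _ ≤ (((U - n - m : ℕ) : ℝ) / m) ^ ((m : ℝ) / 2) := by gcongr
    _ ≤ _ := rpow_half_le_choose (by omega) (by omega) (by omega) (by omega)

/-- For `U = n^{1+α}`, `γ = α/(6(1+α))`, `g < m/2`, `2m ≤ U − n`, `m ≤ n`:
`C(U − n − m, m − g) ≥ U^{3γm} · 2^{−m}` (i.e. `≥ 2^{3γ·m·log₂ U − m}`). -/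
theorem choose_remaining_ge (U n m g : ℕ) (α γ : ℝ) (hα : 0 < α)
    (hγ : γ = α / (6 * (1 + α)))
    (hUn : (U : ℝ) = (n : ℝ) ^ ((1 : ℝ) + α))
    (hg : 2 * g < m) (hmn : m ≤ n) (h2m : 2 * m ≤ U - n) (hn : 0 < n) :
    (U : ℝ) ^ (3 * γ * m) * 2 ^ (-(m : ℝ)) ≤ (((U - n - m).choose (m - g) : ℕ) : ℝ) :=
  choose_remaining_ge_general U n m g α γ hα hγ hUn hg hmn h2m
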